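/- arXiv:2511.07049 — 2 statements merged into one kernel-verified Lean document; each statement's English description precedes it below -/
import Mathlib

section
/- Fix D ≥ 1, a temperature τ > 0, a batch size n ≥ 1, an index i ∈ {1,…,n}, clean embeddings z_1, …, z_n ∈ ℝ^D, and fixed adversarial embeddings w_j ∈ ℝ^D for each j ≠ i. Then for every w₀ ∈ ℝ^D, the gradient of the per-sample clean→adv contrastive loss g_{c→a} at w₀ equals (1/τ)·(exp(−g_{c→a}(w₀)) − 1)·z_i. -/
open Real

/- The loss depends on `w` only through the logit `⟪z_i, w⟫`, so its gradient is the scalar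
derivative of `u ↦ -log p(u)` with `p(u) = e^{u/τ} / (e^{u/τ} + Σ_{j≠i} e^{⟪z_i, w_j⟫/τ})` times `z_i`; that derivative
is `(p(u) - 1)/τ`, and `p(u) = exp(-g_{c→a}(w))`. -/

theorem hasGradientAt_comp_inner {E : Type*} [NormedAddCommGroup E]
    [InnerProductSpace ℝ E] [CompleteSpace E] {φ : ℝ → ℝ} {φ' : ℝ} {a x : E}
    (h : HasDerivAt φ φ' (inner ℝ a x)) :
    HasGradientAt (fun v => φ (inner ℝ a v)) (φ' • a) x := by
  rw [hasGradientAt_iff_hasFDerivAt]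
  refine (h.comp_hasFDerivAt x (innerSL ℝ a).hasFDerivAt).congr_fderiv ?_
  ext v
  simp

theorem hasDerivAt_neg_log_exp_div_exp_add {τ S : ℝ} (hS : 0 ≤ S) (u : ℝ) :
    HasDerivAt (fun u => -log (exp (u / τ) / (exp (u / τ) + S)))
      (1 / τ * (exp (u / τ) / (exp (u / τ) + S) - 1)) u := by
  have hden : ∀ u, exp (u / τ) + S ≠ 0 := fun u => by positivity
  have hloss : (fun u => -log (exp (u / τ) / (exp (u / τ) + S))) =
      fun u => log (exp (u / τ) + S) - u / τ := by
    funext u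
    rw [log_div (exp_pos _).ne' (hden u), log_exp]
    ring
  have hlogit : HasDerivAt (fun u : ℝ => u / τ) (1 / τ) u := by
    simpa using (hasDerivAt_id u).div_const τ
  have hexp : HasDerivAt (fun u => exp (u / τ)) (exp (u / τ) * (1 / τ)) u :=
    (hasDerivAt_exp _).comp u hlogit
  rw [hloss]
  refine ((hexp.add_const S).log (hden u)).sub hlogit |>.congr_deriv ?_
  field_simp

theorem gradient_clean_to_adv_general
    (D n : ℕ) (τ : ℝ)
    (i : Fin n)
    (z : Fin n → EuclideanSpace ℝ (Fin D))   -- clean embeddings z_1, …, z_n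
    (w : Fin n → EuclideanSpace ℝ (Fin D))   -- fixed adversarial embeddings (used for j ≠ i)
    (gca : EuclideanSpace ℝ (Fin D) → ℝ)
    (hgca : ∀ v, gca v =
      -Real.log (Real.exp ((inner ℝ (z i) v : ℝ) / τ) /
        (Real.exp ((inner ℝ (z i) v : ℝ) / τ) +
          ∑ j ∈ Finset.univ.erase i, Real.exp ((inner ℝ (z i) (w j) : ℝ) / τ))))
    (w₀ : EuclideanSpace ℝ (Fin D)) :
    gradient gca w₀ = ((1 / τ) * (Real.exp (-(gca w₀)) - 1)) • z i := by
  set S := ∑ j ∈ Finset.univ.erase i, exp (inner ℝ (z i) (w j) / τ)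
  have hS : 0 ≤ S := Finset.sum_nonneg fun _ _ => (exp_pos _).le
  obtain rfl : gca = fun v => -log (exp (inner ℝ (z i) v / τ) / (exp (inner ℝ (z i) v / τ) + S)) :=
    funext hgca
  have hp : 0 < exp (inner ℝ (z i) w₀ / τ) / (exp (inner ℝ (z i) w₀ / τ) + S) := by positivity
  rw [(hasGradientAt_comp_inner (hasDerivAt_neg_log_exp_div_exp_add hS _)).gradient]
  beta_reduce
  rw [neg_neg, exp_log hp]

/-- The gradient of the per-sample clean→adv contrastive loss
`gca` at any point `w₀` equals `(1/τ)·(exp(−gca(w₀)) − 1)·z_i`. -/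
theorem gradient_clean_to_adv
    (D n : ℕ) (hD : 1 ≤ D) (hn : 1 ≤ n) (τ : ℝ) (hτ : 0 < τ)
    (i : Fin n)
    (z : Fin n → EuclideanSpace ℝ (Fin D))   -- clean embeddings z_1, …, z_n
    (w : Fin n → EuclideanSpace ℝ (Fin D))   -- fixed adversarial embeddings (used for j ≠ i)
    (gca : EuclideanSpace ℝ (Fin D) → ℝ)
    (hgca : ∀ v, gca v =
      -Real.log (Real.exp ((inner ℝ (z i) v : ℝ) / τ) /
        (Real.exp ((inner ℝ (z i) v : ℝ) / τ) +
          ∑ j ∈ Finset.univ.erase i, Real.exp ((inner ℝ (z i) (w j) : ℝ) / τ))))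
    (w₀ : EuclideanSpace ℝ (Fin D)) :
    gradient gca w₀ = ((1 / τ) * (Real.exp (-(gca w₀)) - 1)) • z i :=
  gradient_clean_to_adv_general D n τ i z w gca hgca w₀
end

section
/- Fix D ≥ 1, a temperature τ > 0, a batch size n ≥ 1, an index i ∈ {1,…,n}, clean embeddings z_1, …, z_n ∈ ℝ^D, and fixed adversarial embeddings w_j ∈ ℝ^D for each j ≠ i. Let w₀ ∈ ℝ^D and set q_j(w₀) = exp(⟨w₀, z_j⟩/τ) / Σ_{k=1}^n exp(⟨w₀, z_k⟩/τ). If the weighted sum Σ_{j≠i} q_j(w₀)·z_j is not a scalar multiple of z_i (i.e., it does not lie in the linear span of z_i), then the gradient of the per-sample clean→adv contrastive loss g_{c→a} at w₀ is different from the gradient of the per-sample adv→clean contrastive loss g_{a→c} at w₀; in fact, the gradient of g_{c→a} at w₀ lies in the linear span of z_i while the gradient of g_{a→c} at w₀ does not. -/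
/-!
The clean→adv loss depends on `w` only through `⟪z i, w⟫`, so by the chain rule its gradient is
a multiple of `z i`. The adv→clean loss is a negative log-softmax, whose gradient is
`τ⁻¹ • (∑ k, q k • z k - z i)`; modulo `span {z i}` this is `τ⁻¹ • ∑_{k ≠ i} q k • z k`,
which by assumption lies outside the span.
-/

open Real InnerProductSpace

section GradientCalculus

variable {E : Type*} [NormedAddCommGroup E] [InnerProductSpace ℝ E] [CompleteSpace E]
  {f g : E → ℝ} {f' g' x : E}

theorem HasDerivAt.comp_hasGradientAt {φ : ℝ → ℝ} {φ' : ℝ} (hφ : HasDerivAt φ φ' (f x))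
    (hf : HasGradientAt f f' x) : HasGradientAt (fun v => φ (f v)) (φ' • f') x := by
  rw [hasGradientAt_iff_hasFDerivAt] at hf ⊢
  rw [map_smulₛₗ, RCLike.conj_to_real]
  exact hφ.comp_hasFDerivAt x hf

theorem HasGradientAt.exp (hf : HasGradientAt f f' x) :
    HasGradientAt (fun v => exp (f v)) (exp (f x) • f') x :=
  (hasDerivAt_exp _).comp_hasGradientAt hf

theorem HasGradientAt.log (hf : HasGradientAt f f' x) (hx : f x ≠ 0) :
    HasGradientAt (fun v => log (f v)) ((f x)⁻¹ • f') x :=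
  (hasDerivAt_log hx).comp_hasGradientAt hf

theorem HasGradientAt.sub (hf : HasGradientAt f f' x) (hg : HasGradientAt g g' x) :
    HasGradientAt (fun v => f v - g v) (f' - g') x := by
  rw [hasGradientAt_iff_hasFDerivAt] at hf hg ⊢
  rw [map_sub]
  exact hf.sub hg

theorem HasGradientAt.fun_sum {ι : Type*} {u : Finset ι} {F : ι → E → ℝ} {F' : ι → E}
    (h : ∀ k ∈ u, HasGradientAt (F k) (F' k) x) :
    HasGradientAt (fun v => ∑ k ∈ u, F k v) (∑ k ∈ u, F' k) x := by
  simp only [hasGradientAt_iff_hasFDerivAt] at h ⊢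
  rw [map_sum]
  exact HasFDerivAt.fun_sum h

theorem hasGradientAt_inner_right (a x : E) : HasGradientAt (fun v => ⟪a, v⟫_ℝ) a x := by
  rw [hasGradientAt_iff_hasFDerivAt]
  exact (innerSL ℝ a).hasFDerivAt

theorem hasGradientAt_inner_left (a x : E) : HasGradientAt (fun v => ⟪v, a⟫_ℝ) a x := by
  simpa only [real_inner_comm a] using hasGradientAt_inner_right a x

theorem hasGradientAt_inner_left_div (a x : E) (τ : ℝ) :
    HasGradientAt (fun v => ⟪v, a⟫_ℝ / τ) (τ⁻¹ • a) x := by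
  simpa only [div_eq_inv_mul, mul_one] using
    ((hasDerivAt_id' _).const_mul τ⁻¹).comp_hasGradientAt (hasGradientAt_inner_left a x)

theorem gradient_comp_inner_mem_span {φ : ℝ → ℝ} {a : E} (hφ : DifferentiableAt ℝ φ ⟪a, x⟫_ℝ) :
    gradient (fun v => φ ⟪a, v⟫_ℝ) x ∈ Submodule.span ℝ {a} := by
  rw [(hφ.hasDerivAt.comp_hasGradientAt (hasGradientAt_inner_right a x)).gradient]
  exact Submodule.smul_mem _ _ (Submodule.mem_span_singleton_self a)

end GradientCalculus

section Softmax

variable {E : Type*} [NormedAddCommGroup E] [InnerProductSpace ℝ E] [CompleteSpace E]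
  {ι : Type*} [Fintype ι]

noncomputable def softmax (a : ι → E) (τ : ℝ) (v : E) (k : ι) : ℝ :=
  exp (⟪v, a k⟫_ℝ / τ) / ∑ j, exp (⟪v, a j⟫_ℝ / τ)

theorem hasGradientAt_log_sum_exp [Nonempty ι] (a : ι → E) (τ : ℝ) (x : E) :
    HasGradientAt (fun v => log (∑ k, exp (⟪v, a k⟫_ℝ / τ)))
      (τ⁻¹ • ∑ k, softmax a τ x k • a k) x := by
  have hS : 0 < ∑ k, exp (⟪x, a k⟫_ℝ / τ) :=
    Finset.sum_pos (fun _ _ => exp_pos _) Finset.univ_nonempty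
  have h_sum : HasGradientAt (fun v => ∑ k, exp (⟪v, a k⟫_ℝ / τ))
      (∑ k, exp (⟪x, a k⟫_ℝ / τ) • τ⁻¹ • a k) x :=
    HasGradientAt.fun_sum fun k _ => (hasGradientAt_inner_left_div (a k) x τ).exp
  convert h_sum.log hS.ne' using 1
  simp only [softmax, Finset.smul_sum, smul_smul]
  refine Finset.sum_congr rfl fun k _ => ?_
  ring_nf

theorem hasGradientAt_neg_log_softmax (a : ι → E) (τ : ℝ) (i : ι) (x : E) :
    HasGradientAt (fun v => -log (softmax a τ v i))
      (τ⁻¹ • (∑ k, softmax a τ x k • a k - a i)) x := by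
  have : Nonempty ι := ⟨i⟩
  have h_eq : (fun v => -log (softmax a τ v i)) =
      fun v => log (∑ k, exp (⟪v, a k⟫_ℝ / τ)) - ⟪v, a i⟫_ℝ / τ := by
    funext v
    have hS : 0 < ∑ k, exp (⟪v, a k⟫_ℝ / τ) :=
      Finset.sum_pos (fun _ _ => exp_pos _) Finset.univ_nonempty
    rw [softmax, log_div (exp_pos _).ne' hS.ne', log_exp, neg_sub]
  rw [h_eq, smul_sub]
  exact (hasGradientAt_log_sum_exp a τ x).sub (hasGradientAt_inner_left_div (a i) x τ)

end Softmax

theorem smul_sum_smul_sub_mem_span_singleton_iff {K M ι : Type*} [Field K] [AddCommGroup M]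
    [Module K M] [Fintype ι] [DecidableEq ι] (c : ι → K) (z : ι → M) (i : ι) {t : K}
    (ht : t ≠ 0) :
    t • (∑ k, c k • z k - z i) ∈ Submodule.span K {z i} ↔
      ∑ k ∈ Finset.univ.erase i, c k • z k ∈ Submodule.span K {z i} := by
  have hzi : z i ∈ Submodule.span K {z i} := Submodule.mem_span_singleton_self _
  rw [Submodule.smul_mem_iff _ ht, Submodule.sub_mem_iff_left _ hzi,
    ← Finset.add_sum_erase _ _ (Finset.mem_univ i),
    Submodule.add_mem_iff_right _ (Submodule.smul_mem _ _ hzi)]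

theorem gradient_asymmetry_general
    (D n : ℕ) (τ : ℝ) (hτ : 0 < τ)
    (i : Fin n)
    (z : Fin n → EuclideanSpace ℝ (Fin D))   -- clean embeddings z_1, …, z_n
    (w : Fin n → EuclideanSpace ℝ (Fin D))   -- fixed adversarial embeddings (used for j ≠ i)
    (gca gac : EuclideanSpace ℝ (Fin D) → ℝ)
    (hgca : ∀ v, gca v =
      -Real.log (Real.exp ((inner ℝ (z i) v) / τ) /
        (Real.exp ((inner ℝ (z i) v) / τ) +
          ∑ j ∈ Finset.univ.erase i, Real.exp ((inner ℝ (z i) (w j)) / τ))))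
    (hgac : ∀ v, gac v =
      -Real.log (Real.exp ((inner ℝ v (z i)) / τ) /
        ∑ j, Real.exp ((inner ℝ v (z j)) / τ)))
    (q : EuclideanSpace ℝ (Fin D) → Fin n → ℝ)
    (hq : ∀ v j, q v j =
      Real.exp ((inner ℝ v (z j)) / τ) / ∑ k, Real.exp ((inner ℝ v (z k)) / τ))
    (w₀ : EuclideanSpace ℝ (Fin D))
    (hspan : (∑ j ∈ Finset.univ.erase i, q w₀ j • z j) ∉ Submodule.span ℝ {z i}) :
    gradient gca w₀ ≠ gradient gac w₀ ∧
    gradient gca w₀ ∈ Submodule.span ℝ {z i} ∧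
    gradient gac w₀ ∉ Submodule.span ℝ {z i} := by
  set C := ∑ j ∈ Finset.univ.erase i, exp (⟪z i, w j⟫_ℝ / τ)
  have h_ca : gradient gca w₀ ∈ Submodule.span ℝ {z i} := by
    rw [funext hgca]
    exact gradient_comp_inner_mem_span (φ := fun t => -log (exp (t / τ) / (exp (t / τ) + C)))
      (by fun_prop (disch := positivity))
  have h_ac : gradient gac w₀ = τ⁻¹ • (∑ k, q w₀ k • z k - z i) := by
    rw [funext hgac, funext fun j => hq w₀ j]
    exact (hasGradientAt_neg_log_softmax z τ i w₀).gradient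
  have h_ac_mem : gradient gac w₀ ∉ Submodule.span ℝ {z i} := by
    rwa [h_ac, smul_sum_smul_sub_mem_span_singleton_iff _ _ _ (inv_ne_zero hτ.ne')]
  exact ⟨fun h => h_ac_mem (h ▸ h_ca), h_ca, h_ac_mem⟩

/-- gradient asymmetry, Theorem 2. If the weighted sum
`Σ_{j≠i} q_j(w₀)·z_j` does not lie in the linear span of `z_i`, then the gradients
of the two single-direction contrastive losses at `w₀` differ; in fact the gradient
of `gca` lies in the span of `z_i` while the gradient of `gac` does not. -/
theorem gradient_asymmetry
    (D n : ℕ) (hD : 1 ≤ D) (hn : 1 ≤ n) (τ : ℝ) (hτ : 0 < τ)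
    (i : Fin n)
    (z : Fin n → EuclideanSpace ℝ (Fin D))   -- clean embeddings z_1, …, z_n
    (w : Fin n → EuclideanSpace ℝ (Fin D))   -- fixed adversarial embeddings (used for j ≠ i)
    (gca gac : EuclideanSpace ℝ (Fin D) → ℝ)
    (hgca : ∀ v, gca v =
      -Real.log (Real.exp ((inner ℝ (z i) v) / τ) /
        (Real.exp ((inner ℝ (z i) v) / τ) +
          ∑ j ∈ Finset.univ.erase i, Real.exp ((inner ℝ (z i) (w j)) / τ))))
    (hgac : ∀ v, gac v =
      -Real.log (Real.exp ((inner ℝ v (z i)) / τ) /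
        ∑ j, Real.exp ((inner ℝ v (z j)) / τ)))
    (q : EuclideanSpace ℝ (Fin D) → Fin n → ℝ)
    (hq : ∀ v j, q v j =
      Real.exp ((inner ℝ v (z j)) / τ) / ∑ k, Real.exp ((inner ℝ v (z k)) / τ))
    (w₀ : EuclideanSpace ℝ (Fin D))
    (hspan : (∑ j ∈ Finset.univ.erase i, q w₀ j • z j) ∉ Submodule.span ℝ {z i}) :
    gradient gca w₀ ≠ gradient gac w₀ ∧
    gradient gca w₀ ∈ Submodule.span ℝ {z i} ∧
    gradient gac w₀ ∉ Submodule.span ℝ {z i} :=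
  gradient_asymmetry_general D n τ hτ i z w gca gac hgca hgac q hq w₀ hspan
end
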